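/- arXiv:2602.00325 — 2 statements merged into one kernel-verified Lean document; each statement's English description precedes it below -/
import Mathlib

section
/- Let Z = {G^c ξ^c + G^b ξ^b + c : ξ^c ∈ [0,1]^{n_g}, ξ^b ∈ {0,1}^{n_b}, A^c ξ^c + A^b ξ^b = b} ⊆ ℝ^n be a hybrid zonotope (with G^c ∈ ℝ^{n×n_g}, G^b ∈ ℝ^{n×n_b}, c ∈ ℝ^n, A^c ∈ ℝ^{n_c×n_g}, A^b ∈ ℝ^{n_c×n_b}, b ∈ ℝ^{n_c}), let H = {x ∈ ℝ^m : L x ≤ r, A_h x = b_h} be an H-rep polytope (L ∈ ℝ^{n_i×m}, r ∈ ℝ^{n_i}, A_h ∈ ℝ^{n_e×m}, b_h ∈ ℝ^{n_e}), and let R ∈ ℝ^{m×n}. Define s ∈ ℝ^{n_i} by s = r − L R c + Σ_{i=1}^{n_g} |L R g^{c,i}| + Σ_{i=1}^{n_b} |L R g^{b,i}|, where g^{c,i} and g^{b,i} are the i-th columns of G^c and G^b and the absolute values are taken entrywise, and assume s ≥ 0 entrywise. Then the generalized intersection Z ∩_R H = {z ∈ Z : R z ∈ H} equals the hybrid zonotope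 {G^c ξ^c + G^b ξ^b + c : ξ^c ∈ [0,1]^{n_g}, ξ^s ∈ [0,1]^{n_i}, ξ^b ∈ {0,1}^{n_b}, A^c ξ^c + A^b ξ^b = b, L R G^c ξ^c + diag(s) ξ^s + L R G^b ξ^b = r − L R c, A_h R G^c ξ^c + A_h R G^b ξ^b = b_h − A_h R c}. -/
/-!
A point `z = G^c ξ^c + G^b ξ^b + c` of the hybrid zonotope satisfies the equality constraints
of `H` at `R z` exactly when the added equality constraint holds, since `R z` is affine in the
factors. For the inequalities, write `L R z ≤ r` as `L R z + σ = r` with slack `σ ≥ 0`.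
Because all factors lie in `[0,1]`, `σ = r - L R z` is bounded entrywise by `s`, so
`σ = diag(s) ξ^s` for some `ξ^s ∈ [0,1]^{n_i}`; conversely every such `σ` is nonnegative
since `s ≥ 0`.
-/

open Matrix

theorem neg_mulVec_le_sum_abs {ι κ K : Type*} [Fintype κ] [Ring K] [LinearOrder K]
    [IsOrderedRing K] (M : Matrix ι κ K) {ξ : κ → K} (hξ : ∀ j, ξ j ∈ Set.Icc (0 : K) 1)
    (i : ι) : -(M *ᵥ ξ) i ≤ ∑ j, |M i j| := by
  rw [mulVec, dotProduct, ← Finset.sum_neg_distrib]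
  refine Finset.sum_le_sum fun j _ => ?_
  calc -(M i j * ξ j) ≤ |M i j * ξ j| := neg_le_abs _
    _ = |M i j| * ξ j := by rw [abs_mul, abs_of_nonneg (hξ j).1]
    _ ≤ |M i j| := mul_le_of_le_one_right (abs_nonneg _) (hξ j).2

theorem exists_mem_Icc_mul_eq {K : Type*} [Field K] [LinearOrder K] [IsStrictOrderedRing K]
    {s t : K} (ht : 0 ≤ t) (hts : t ≤ s) : ∃ ξ ∈ Set.Icc (0 : K) 1, s * ξ = t := by
  rcases (ht.trans hts).eq_or_lt with hs | hs
  · exact ⟨0, by simp, by linarith⟩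
  · exact ⟨t / s, ⟨div_nonneg ht hs.le, div_le_one_of_le₀ hts hs.le⟩,
      mul_div_cancel₀ t hs.ne'⟩

theorem forall_le_iff_exists_diagonal_slack {ι K : Type*} [Fintype ι] [DecidableEq ι] [Field K]
    [LinearOrder K] [IsStrictOrderedRing K] {y r s : ι → K} (hs_nonneg : ∀ i, 0 ≤ s i)
    (hs : ∀ i, r i - y i ≤ s i) :
    (∀ i, y i ≤ r i) ↔
      ∃ ξ : ι → K, (∀ i, ξ i ∈ Set.Icc (0 : K) 1) ∧ y + diagonal s *ᵥ ξ = r := by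
  constructor
  · intro hyr
    choose ξ hξ hsξ using fun i => exists_mem_Icc_mul_eq (sub_nonneg.2 (hyr i)) (hs i)
    refine ⟨ξ, hξ, funext fun i => ?_⟩
    simp only [Pi.add_apply, mulVec_diagonal, hsξ]
    ring
  · rintro ⟨ξ, hξ, hyr⟩ i
    have hi := congrFun hyr i
    simp only [Pi.add_apply, mulVec_diagonal] at hi
    linarith [mul_nonneg (hs_nonneg i) (hξ i).1]

theorem mulVec_mulVec_affine {l m n p q K : Type*} [Fintype m] [Fintype n] [Fintype p]
    [Fintype q] [NonUnitalSemiring K] (M : Matrix l m K) (R : Matrix m n K) (Gc : Matrix n p K)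
    (Gb : Matrix n q K) (ξc : p → K) (ξb : q → K) (c : n → K) :
    M *ᵥ R *ᵥ (Gc *ᵥ ξc + Gb *ᵥ ξb + c) =
      (M * R * Gc) *ᵥ ξc + (M * R * Gb) *ᵥ ξb + (M * R) *ᵥ c := by
  simp only [mulVec_mulVec, mulVec_add, Matrix.mul_assoc]

section Fibre

variable {n ng nb m ni ne : ℕ} {Gc : Matrix (Fin n) (Fin ng) ℝ}
  {Gb : Matrix (Fin n) (Fin nb) ℝ} {c : Fin n → ℝ} {L : Matrix (Fin ni) (Fin m) ℝ}
  {r : Fin ni → ℝ}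
  {Ah : Matrix (Fin ne) (Fin m) ℝ} {bh : Fin ne → ℝ} {R : Matrix (Fin m) (Fin n) ℝ}
  {s : Fin ni → ℝ} {ξc : Fin ng → ℝ} {ξb : Fin nb → ℝ}

theorem sub_mulVec_le_slack (hξc : ∀ i, ξc i ∈ Set.Icc (0 : ℝ) 1)
    (hξb : ∀ i, ξb i ∈ Set.Icc (0 : ℝ) 1)
    (hs : ∀ i, s i = r i - (L * R).mulVec c i
      + ∑ j : Fin ng, |(L * R * Gc) i j| + ∑ j : Fin nb, |(L * R * Gb) i j|) (i : Fin ni) :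
    r i - (L *ᵥ R *ᵥ (Gc *ᵥ ξc + Gb *ᵥ ξb + c)) i ≤ s i := by
  rw [mulVec_mulVec_affine, hs i]
  simp only [Pi.add_apply]
  linarith [neg_mulVec_le_sum_abs (L * R * Gc) hξc i, neg_mulVec_le_sum_abs (L * R * Gb) hξb i]

theorem mulVec_mem_hrep_iff_exists_slack (hξc : ∀ i, ξc i ∈ Set.Icc (0 : ℝ) 1)
    (hξb : ∀ i, ξb i ∈ Set.Icc (0 : ℝ) 1)
    (hs : ∀ i, s i = r i - (L * R).mulVec c i
      + ∑ j : Fin ng, |(L * R * Gc) i j| + ∑ j : Fin nb, |(L * R * Gb) i j|)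
    (hs_nonneg : ∀ i, 0 ≤ s i) :
    ((∀ i, (L *ᵥ R *ᵥ (Gc *ᵥ ξc + Gb *ᵥ ξb + c)) i ≤ r i) ∧
        Ah *ᵥ R *ᵥ (Gc *ᵥ ξc + Gb *ᵥ ξb + c) = bh) ↔
      ∃ ξs : Fin ni → ℝ, (∀ i, ξs i ∈ Set.Icc (0 : ℝ) 1) ∧
        (L * R * Gc) *ᵥ ξc + diagonal s *ᵥ ξs + (L * R * Gb) *ᵥ ξb = r - (L * R) *ᵥ c ∧
        (Ah * R * Gc) *ᵥ ξc + (Ah * R * Gb) *ᵥ ξb = bh - (Ah * R) *ᵥ c := by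
  rw [forall_le_iff_exists_diagonal_slack hs_nonneg (sub_mulVec_le_slack hξc hξb hs),
    mulVec_mulVec_affine, mulVec_mulVec_affine]
  have slack_last (ξs : Fin ni → ℝ) :
      (L * R * Gc) *ᵥ ξc + (L * R * Gb) *ᵥ ξb + (L * R) *ᵥ c + diagonal s *ᵥ ξs =
        (L * R * Gc) *ᵥ ξc + diagonal s *ᵥ ξs + (L * R * Gb) *ᵥ ξb + (L * R) *ᵥ c := by
    abel
  simp only [eq_sub_iff_add_eq, slack_last, ← exists_and_right, and_assoc]

end Fibre

/-- Generalized intersection of a hybrid zonotope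
`Z = {G^c ξ^c + G^b ξ^b + c : ξ^c ∈ [0,1]^{n_g}, ξ^b ∈ {0,1}^{n_b}, A^c ξ^c + A^b ξ^b = b}`
with an H-rep polytope `H = {x : L x ≤ r, A_h x = b_h}` under a matrix `R`:
with `s = r - L R c + Σᵢ |L R g^{c,i}| + Σᵢ |L R g^{b,i}| ≥ 0` (entrywise),
`Z ∩_R H = {z ∈ Z : R z ∈ H}` is the hybrid zonotope with the added slack
factors `ξ^s ∈ [0,1]^{n_i}` and constraints
`L R G^c ξ^c + diag(s) ξ^s + L R G^b ξ^b = r - L R c` and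
`A_h R G^c ξ^c + A_h R G^b ξ^b = b_h - A_h R c`. -/
theorem hybZono_inter_hrep
    (n ng nb nc m ni ne : ℕ)
    (Gc : Matrix (Fin n) (Fin ng) ℝ) (Gb : Matrix (Fin n) (Fin nb) ℝ)
    (c : Fin n → ℝ)
    (Ac : Matrix (Fin nc) (Fin ng) ℝ) (Ab : Matrix (Fin nc) (Fin nb) ℝ)
    (b : Fin nc → ℝ)
    (L : Matrix (Fin ni) (Fin m) ℝ) (r : Fin ni → ℝ)
    (Ah : Matrix (Fin ne) (Fin m) ℝ) (bh : Fin ne → ℝ)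
    (R : Matrix (Fin m) (Fin n) ℝ)
    (Z : Set (Fin n → ℝ))
    (hZ : Z = {x : Fin n → ℝ | ∃ ξc : Fin ng → ℝ, ∃ ξb : Fin nb → ℝ,
      (∀ i, ξc i ∈ Set.Icc (0 : ℝ) 1) ∧ (∀ i, ξb i = 0 ∨ ξb i = 1) ∧
      Ac.mulVec ξc + Ab.mulVec ξb = b ∧
      x = Gc.mulVec ξc + Gb.mulVec ξb + c})
    (H : Set (Fin m → ℝ))
    (hH : H = {x : Fin m → ℝ | (∀ i, L.mulVec x i ≤ r i) ∧ Ah.mulVec x = bh})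
    (s : Fin ni → ℝ)
    (hs : ∀ i, s i = r i - (L * R).mulVec c i
      + ∑ j : Fin ng, |(L * R * Gc) i j| + ∑ j : Fin nb, |(L * R * Gb) i j|)
    (hs_nonneg : ∀ i, 0 ≤ s i) :
    {z ∈ Z | R.mulVec z ∈ H} =
    {x : Fin n → ℝ | ∃ ξc : Fin ng → ℝ, ∃ ξs : Fin ni → ℝ, ∃ ξb : Fin nb → ℝ,
      (∀ i, ξc i ∈ Set.Icc (0 : ℝ) 1) ∧ (∀ i, ξs i ∈ Set.Icc (0 : ℝ) 1) ∧
      (∀ i, ξb i = 0 ∨ ξb i = 1) ∧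
      Ac.mulVec ξc + Ab.mulVec ξb = b ∧
      (L * R * Gc).mulVec ξc + (Matrix.diagonal s).mulVec ξs
        + (L * R * Gb).mulVec ξb = r - (L * R).mulVec c ∧
      (Ah * R * Gc).mulVec ξc + (Ah * R * Gb).mulVec ξb = bh - (Ah * R).mulVec c ∧
      x = Gc.mulVec ξc + Gb.mulVec ξb + c} := by
  subst hZ hH
  ext x
  simp only [Set.mem_ofPred_eq]
  have binary_mem_Icc {ξb : Fin nb → ℝ} (hξb : ∀ i, ξb i = 0 ∨ ξb i = 1) :
      ∀ i, ξb i ∈ Set.Icc (0 : ℝ) 1 := fun i => by rcases hξb i with h | h <;> simp [h]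
  constructor
  · rintro ⟨⟨ξc, ξb, hξc, hξb, hab, rfl⟩, hRx⟩
    obtain ⟨ξs, hξs, hineq, heq⟩ :=
      (mulVec_mem_hrep_iff_exists_slack hξc (binary_mem_Icc hξb) hs hs_nonneg).1 hRx
    exact ⟨ξc, ξs, ξb, hξc, hξs, hξb, hab, hineq, heq, rfl⟩
  · rintro ⟨ξc, ξs, ξb, hξc, hξs, hξb, hab, hineq, heq, rfl⟩
    exact ⟨⟨ξc, ξb, hξc, hξb, hab, rfl⟩,
      (mulVec_mem_hrep_iff_exists_slack hξc (binary_mem_Icc hξb) hs hs_nonneg).2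
        ⟨ξs, hξs, hineq, heq⟩⟩
end

section
/- Let k ∈ ℤ and t₁, t₂ ∈ ℤ with t₁ ≤ t₂, and let a, b : ℤ → ℝ be sequences with a(j), b(j) ∈ {0,1} for all j. Then the following are equivalent: (i) there exists t ∈ [k+t₁, k+t₂] (integers) such that b(t) = 1 and a(t') = 1 for all integers t' with k+t₁ ≤ t' < t; (ii) Σ_{j=k+t₁}^{k+t₂} b(j) ≥ 1, and for every integer t with k+t₁ < t ≤ k+t₂ it holds that b(t) ≤ Σ_{j=k+t₁}^{t−1} ( a(j)/(t − t₁ − k) + b(j) ). -/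
/-!
Over a window `[k + t₁, t)` of length `t - t₁ - k`, the sum of the binary `b` is either `0` or at
least `1`, while the mean of `a` lies in `[0, 1]` and equals `1` exactly when `a ≡ 1` there. So the
`t`-th inequality says: if `φ₂` holds at `t`, then `φ₁` holds throughout `[k + t₁, t)` or `φ₂`
already held somewhere in it. Given that `φ₂` holds somewhere in `[k + t₁, k + t₂]`, applying this
at the first such time yields the until witness.
-/

open Finset

section FirstWitness

variable {α : Type*} [LinearOrder α] [LocallyFiniteOrder α] {P Q : α → Prop} {L R : α}

theorem exists_until_iff :
    (∃ t, L ≤ t ∧ t ≤ R ∧ Q t ∧ ∀ t', L ≤ t' → t' < t → P t') ↔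
      (∃ t, L ≤ t ∧ t ≤ R ∧ Q t) ∧
        ∀ t, L < t → t ≤ R → Q t →
          (∀ t', L ≤ t' → t' < t → P t') ∨ ∃ t', L ≤ t' ∧ t' < t ∧ Q t' := by
  classical
  constructor
  · rintro ⟨t₀, hLt₀, ht₀R, hQt₀, hP⟩
    refine ⟨⟨t₀, hLt₀, ht₀R, hQt₀⟩, fun t _ _ _ => ?_⟩
    rcases le_or_gt t t₀ with htt₀ | ht₀t
    · exact .inl fun t' hLt' ht't => hP t' hLt' (ht't.trans_le htt₀)
    · exact .inr ⟨t₀, hLt₀, ht₀t, hQt₀⟩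
  · rintro ⟨⟨t, hLt, htR, hQt⟩, h⟩
    obtain ⟨t₀, ht₀⟩ := ((Icc L R).filter Q).exists_minimal ⟨t, by simp [hLt, htR, hQt]⟩
    simp only [mem_filter, mem_Icc] at ht₀
    obtain ⟨⟨⟨hLt₀, ht₀R⟩, hQt₀⟩, hmin⟩ := ht₀
    refine ⟨t₀, hLt₀, ht₀R, hQt₀, ?_⟩
    rcases hLt₀.eq_or_lt with rfl | hLt₀
    · exact fun t' h₁ h₂ => absurd h₂ h₁.not_gt
    refine (h t₀ hLt₀ ht₀R hQt₀).resolve_right ?_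
    rintro ⟨t', hLt', ht't₀, hQt'⟩
    exact ht't₀.not_ge (hmin ⟨⟨hLt', ht't₀.le.trans ht₀R⟩, hQt'⟩ ht't₀.le)

end FirstWitness

section BinarySums

variable {ι : Type*} {s : Finset ι} {f : ι → ℝ}

theorem one_le_sum_iff_exists_eq_one (hf : ∀ j ∈ s, f j = 0 ∨ f j = 1) :
    1 ≤ ∑ j ∈ s, f j ↔ ∃ j ∈ s, f j = 1 := by
  constructor
  · intro h
    by_contra! hne
    rw [sum_eq_zero fun j hj => (hf j hj).resolve_right (hne j hj)] at h
    norm_num at h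
  · rintro ⟨j, hj, hfj⟩
    exact hfj ▸ single_le_sum (fun i hi => by rcases hf i hi with h | h <;> simp [h]) hj

theorem one_le_sum_div_card_iff (hs : s.Nonempty) (hf : ∀ j ∈ s, f j ≤ 1) :
    1 ≤ (∑ j ∈ s, f j) / #s ↔ ∀ j ∈ s, f j = 1 := by
  have hcard : (#s : ℝ) = ∑ _j ∈ s, 1 := by simp
  have hsum : ∑ j ∈ s, f j ≤ ∑ _j ∈ s, 1 := sum_le_sum hf
  rw [le_div_iff₀ (by exact_mod_cast hs.card_pos), one_mul, hcard, ← sum_eq_sum_iff_of_le hf]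
  exact ⟨hsum.antisymm, ge_of_eq⟩

theorem sum_eq_zero_or_one_le_sum (hf : ∀ j ∈ s, f j = 0 ∨ f j = 1) :
    ∑ j ∈ s, f j = 0 ∨ 1 ≤ ∑ j ∈ s, f j := by
  rw [one_le_sum_iff_exists_eq_one hf, or_iff_not_imp_right]
  exact fun h => sum_eq_zero fun j hj => (hf j hj).resolve_right fun h₁ => h ⟨j, hj, h₁⟩

theorem le_sum_div_card_add_sum_iff (hs : s.Nonempty) {a b : ι → ℝ} {c : ℝ}
    (ha₀ : ∀ j ∈ s, 0 ≤ a j) (ha₁ : ∀ j ∈ s, a j ≤ 1) (hb : ∀ j ∈ s, b j = 0 ∨ b j = 1)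
    (hc : c = 0 ∨ c = 1) :
    c ≤ ∑ j ∈ s, (a j / #s + b j) ↔ (c = 1 → (∀ j ∈ s, a j = 1) ∨ ∃ j ∈ s, b j = 1) := by
  rw [sum_add_distrib, ← sum_div, ← one_le_sum_div_card_iff hs ha₁,
    ← one_le_sum_iff_exists_eq_one hb]
  have hmean : 0 ≤ (∑ j ∈ s, a j) / #s := div_nonneg (sum_nonneg ha₀) (Nat.cast_nonneg _)
  rcases hc with rfl | rfl <;> rcases sum_eq_zero_or_one_le_sum hb with hB | hB
  · exact iff_of_true (by linarith) (by norm_num)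
  · exact iff_of_true (by linarith) (by norm_num)
  · rw [imp_iff_right rfl, hB, add_zero]
    norm_num
  · exact iff_of_true (by linarith) fun _ => .inr hB

end BinarySums

open Finset in
theorem mtl_until_inequalities_general (k t₁ t₂ : ℤ) (a b : ℤ → ℝ)
    (ha : ∀ j, a j = 0 ∨ a j = 1) (hb : ∀ j, b j = 0 ∨ b j = 1) :
    (∃ t : ℤ, k + t₁ ≤ t ∧ t ≤ k + t₂ ∧ b t = 1 ∧
      ∀ t' : ℤ, k + t₁ ≤ t' → t' < t → a t' = 1) ↔
    (1 ≤ ∑ j ∈ Icc (k + t₁) (k + t₂), b j ∧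
      ∀ t : ℤ, k + t₁ < t → t ≤ k + t₂ →
        b t ≤ ∑ j ∈ Icc (k + t₁) (t - 1), (a j / ((t - t₁ - k : ℤ) : ℝ) + b j)) := by
  have ha_mem : ∀ j, 0 ≤ a j ∧ a j ≤ 1 := fun j => by rcases ha j with h | h <;> simp [h]
  rw [exists_until_iff, one_le_sum_iff_exists_eq_one fun j _ => hb j]
  simp only [mem_Icc, and_assoc]
  refine and_congr_right fun _ => forall_congr' fun t => forall₂_congr fun hLt _ => ?_
  have hcard : ((t - t₁ - k : ℤ) : ℝ) = #(Ico (k + t₁) t) := by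
    rw [Int.card_Ico, ← Int.cast_natCast, Int.toNat_of_nonneg (by omega), sub_add_eq_sub_sub_swap]
  rw [hcard, Icc_sub_one_right_eq_Ico, le_sum_div_card_add_sum_iff ⟨k + t₁, by simpa⟩
    (fun j _ => (ha_mem j).1) (fun j _ => (ha_mem j).2) (fun j _ => hb j) (hb t)]
  simp only [mem_Ico, and_imp, and_assoc]

open Finset in
/-- Encoding of the MTL "until" operator by `τ` linear inequalities.  With
binary indicator sequences `a, b : ℤ → ℝ` for propositions `φ₁, φ₂`, satisfaction
of `φ₁ U_{[t₁,t₂]} φ₂` at time `k` (statement (i)) is equivalent to the system of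
linear inequalities (ii). -/
theorem mtl_until_inequalities (k t₁ t₂ : ℤ) (ht : t₁ ≤ t₂) (a b : ℤ → ℝ)
    (ha : ∀ j, a j = 0 ∨ a j = 1) (hb : ∀ j, b j = 0 ∨ b j = 1) :
    (∃ t : ℤ, k + t₁ ≤ t ∧ t ≤ k + t₂ ∧ b t = 1 ∧
      ∀ t' : ℤ, k + t₁ ≤ t' → t' < t → a t' = 1) ↔
    (1 ≤ ∑ j ∈ Icc (k + t₁) (k + t₂), b j ∧
      ∀ t : ℤ, k + t₁ < t → t ≤ k + t₂ →
        b t ≤ ∑ j ∈ Icc (k + t₁) (t - 1), (a j / ((t - t₁ - k : ℤ) : ℝ) + b j)) :=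
  mtl_until_inequalities_general k t₁ t₂ a b ha hb
end
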